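/- Let e = gcd(d, q−1) ≥ 2 and let j ≥ 1 be an integer. For any two distinct γ, δ ∈ Γ_e \ {1}, the polynomials G*_{j,γ} and G*_{j,δ} are coprime in F_q[X], i.e., gcd(G*_{j,γ}, G*_{j,δ}) = 1. -/

import Mathlib

open Polynomial in
/-- The iterates `F_0(X) = X`, `F_k(X) = F_{k-1}(X)^d + X`. -/
noncomputable def Fiter (F : Type*) [Field F] (d : ℕ) : ℕ → Polynomial F
  | 0 => Polynomial.X
  | (k + 1) => (Fiter F d k) ^ d + Polynomial.X

/-- The polynomials `G_{k,γ}(X) = γ·F_k(X) − X`. -/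
noncomputable def Gpoly (F : Type*) [Field F] (d : ℕ) (γ : F) (k : ℕ) : Polynomial F :=
  Polynomial.C γ * Fiter F d k - Polynomial.X

open Polynomial

/-! Since `X ∣ F_j`, write `F_j = X·H`; then `G*_{j,γ} = γH − 1` and `G*_{j,δ} = δH − 1`, and
`δ(γH − 1) − γ(δH − 1) = γ − δ` is a nonzero constant. -/

theorem isCoprime_mul_sub_one_of_isUnit_sub {R : Type*} [CommRing R] {a b : R} (h : R)
    (hab : IsUnit (a - b)) : IsCoprime (a * h - 1) (b * h - 1) := by
  obtain ⟨u, hu⟩ := hab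
  refine ⟨↑u⁻¹ * b, -(↑u⁻¹ * a), ?_⟩
  linear_combination -(↑u⁻¹ : R) * hu + u.inv_mul

theorem X_dvd_Fiter (F : Type*) [Field F] {d : ℕ} (hd : d ≠ 0) (k : ℕ) : X ∣ Fiter F d k := by
  induction k with
  | zero => exact dvd_rfl
  | succ k ih => exact dvd_add (dvd_pow ih hd) dvd_rfl

theorem Gpoly_div_X (F : Type*) [Field F] {d : ℕ} (hd : d ≠ 0) (γ : F) (k : ℕ) :
    Gpoly F d γ k / X = C γ * (Fiter F d k / X) - 1 := by
  obtain ⟨H, hH⟩ := X_dvd_Fiter F hd k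
  have hG : Gpoly F d γ k = X * (C γ * H - 1) := by rw [Gpoly, hH]; ring
  rw [hG, hH, mul_div_cancel_left₀ _ X_ne_zero, mul_div_cancel_left₀ _ X_ne_zero]

theorem stmt16_general (F : Type*) [Field F] (d : ℕ) (hd : 2 ≤ d)
    (j : ℕ) (γ δ : F)
    (hne : γ ≠ δ) :
    IsCoprime (Gpoly F d γ j / Polynomial.X) (Gpoly F d δ j / Polynomial.X) := by
  have hd0 : d ≠ 0 := by omega
  rw [Gpoly_div_X F hd0, Gpoly_div_X F hd0]
  apply isCoprime_mul_sub_one_of_isUnit_sub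
  rw [← C_sub, isUnit_C]
  exact (sub_ne_zero.mpr hne).isUnit

theorem stmt16 (F : Type*) [Field F] [Fintype F] (d : ℕ) (hd : 2 ≤ d)
    (e : ℕ) (he : e = Nat.gcd d (Fintype.card F - 1)) (he2 : 2 ≤ e)
    (j : ℕ) (hj : 1 ≤ j) (γ δ : F)
    (hγ : γ ^ e = 1) (hγ1 : γ ≠ 1) (hδ : δ ^ e = 1) (hδ1 : δ ≠ 1) (hne : γ ≠ δ) :
    IsCoprime (Gpoly F d γ j / Polynomial.X) (Gpoly F d δ j / Polynomial.X) :=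
  stmt16_general F d hd j γ δ hne
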